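/- arXiv:1511.05397 — 2 statements merged into one kernel-verified Lean document; each statement's English description precedes it below -/
import Mathlib

section
/- Suppose d_k ≥ d_k^r for every k ∈ V_R and there exist distinct vertices i, j ∈ V_R with d_i > d_i^r, d_j > d_j^r, and Z_i ≠ Z_j. Then the subgraph homophily is not point identified: there exist two compatible pairs (G¹_SU, Z¹_SU) and (G²_SU, Z²_SU), each having σ(A) > 0 and σ(Z) > 0 (so that h is defined for both), such that h(G¹_SU, Z¹_SU) ≠ h(G²_SU, Z²_SU). -/
/-!
Attach `d_k - d_k^r` fresh pendant vertices to every `k ∈ V_R`, each carrying the trait of its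
anchor: this is compatible, and every pendant edge joins equal traits. Exchanging the anchors of
a pendant `u_i` of `i` and a pendant `u_j` of `j` keeps compatibility, the vertex set, the traits
and the number of edges, hence `Ā`, `Z̄`, `σ(A)` and `σ(Z)`; but it turns two edges joining equal
traits into two joining `Z_i ≠ Z_j`, so the covariance, and with it the homophily, strictly drops.
-/

open Finset

namespace RDS

/-- Edge sets of finite undirected simple graphs on the ambient vertex type `ℕ`. -/
abbrev Edges := Finset (Sym2 ℕ)

instance (VR : Finset ℕ) : DecidablePred (fun e : Sym2 ℕ => ∀ v ∈ e, v ∈ VR) :=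
  fun _ => decidable_of_iff _ Finset.mem_sym2_iff

instance (VR : Finset ℕ) : DecidablePred (fun e : Sym2 ℕ => ∃ v ∈ e, v ∈ VR) :=
  fun e => decidable_of_iff (∃ v ∈ VR, v ∈ e) (by tauto)

instance (VR : Finset ℕ) : DecidablePred (fun e : Sym2 ℕ => ∃ v ∈ e, v ∉ VR) :=
  fun e => decidable_of_iff (¬ ∀ v ∈ e, v ∈ VR) (by simp)

/-- Degree of `i` in an edge set: number of edges containing `i`. -/
def degE (E : Edges) (i : ℕ) : ℕ := (E.filter (fun e => i ∈ e)).card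

/-- Edge set of the undirected graph underlying the directed recruitment graph `E_R`. -/
def uRec (ER : Finset (ℕ × ℕ)) : Edges := ER.image (fun p => s(p.1, p.2))

/-- Degree of `i` in the undirected graph underlying the recruitment graph (`d_i^r`). -/
def dRec (ER : Finset (ℕ × ℕ)) (i : ℕ) : ℕ := degE (uRec ER) i

/-- Compatibility of an augmented recruitment-induced subgraph `(V_SU, E_SU, Z_SU)`
with the observed RDS data `(G_R, d_R, Z_R)`. -/
structure Compat (VR : Finset ℕ) (ER : Finset (ℕ × ℕ)) (d : ℕ → ℕ) (ZR : ℕ → Bool)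
    (VSU : Finset ℕ) (ESU : Edges) (Z : ℕ → Bool) : Prop where
  loopless : ∀ e ∈ ESU, ¬ e.IsDiag
  vr_subset : VR ⊆ VSU
  edges_subset : ∀ e ∈ ESU, ∀ v ∈ e, v ∈ VSU
  er_subset : ∀ p ∈ ER, s(p.1, p.2) ∈ ESU
  trait_agree : ∀ i ∈ VR, Z i = ZR i
  covered : ∀ u ∈ VSU, u ∉ VR → ∃ v ∈ VR, s(u, v) ∈ ESU
  no_unsampled_edge : ∀ e ∈ ESU, ∃ v ∈ e, v ∈ VR
  degree_eq : ∀ i ∈ VR, degE ESU i = d i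

/-- The set `P` of unordered pairs `{i,j}` with `i ∈ V_R`, `j ∈ V_SU`, `i ≠ j`. -/
def pairsP (VR VSU : Finset ℕ) : Edges :=
  ((VR ×ˢ VSU).filter (fun p => p.1 ≠ p.2)).image (fun p => s(p.1, p.2))

/-- Indicator `1{Z_i = Z_j}` of trait agreement on an unordered pair, as a real number. -/
def zInd (Z : ℕ → Bool) (e : Sym2 ℕ) : ℝ :=
  Sym2.lift ⟨fun i j => if Z i = Z j then 1 else 0, fun i j => by simp [eq_comm]⟩ e

/-- Adjacency indicator `A_{ij}` of an unordered pair. -/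
def aInd (E : Edges) (e : Sym2 ℕ) : ℝ := if e ∈ E then 1 else 0

/-- `Ā = |E_SU| / N_P`. -/
noncomputable def AbarC (VR VSU : Finset ℕ) (ESU : Edges) : ℝ :=
  (ESU.card : ℝ) / ((pairsP VR VSU).card : ℝ)

/-- `Z̄`, the mean of `1{Z_i = Z_j}` over `P`. -/
noncomputable def ZbarC (VR VSU : Finset ℕ) (Z : ℕ → Bool) : ℝ :=
  (∑ e ∈ pairsP VR VSU, zInd Z e) / ((pairsP VR VSU).card : ℝ)

/-- `σ(A)`. -/
noncomputable def sigmaAC (VR VSU : Finset ℕ) (ESU : Edges) : ℝ :=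
  Real.sqrt ((∑ e ∈ pairsP VR VSU, (aInd ESU e - AbarC VR VSU ESU) ^ 2) /
    ((pairsP VR VSU).card : ℝ))

/-- `σ(Z)`. -/
noncomputable def sigmaZC (VR VSU : Finset ℕ) (Z : ℕ → Bool) : ℝ :=
  Real.sqrt ((∑ e ∈ pairsP VR VSU, (zInd Z e - ZbarC VR VSU Z) ^ 2) /
    ((pairsP VR VSU).card : ℝ))

/-- Subgraph homophily `h(G_SU, Z_SU)` of a compatible pair. -/
noncomputable def homophilyC (VR VSU : Finset ℕ) (ESU : Edges) (Z : ℕ → Bool) : ℝ :=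
  (∑ e ∈ pairsP VR VSU, (aInd ESU e - AbarC VR VSU ESU) * (zInd Z e - ZbarC VR VSU Z)) /
    (((pairsP VR VSU).card : ℝ) * sigmaAC VR VSU ESU * sigmaZC VR VSU Z)

lemma sqrt_sum_sq_sub_div_card_pos {α : Type*} {P : Finset α} {g : α → ℝ} (c : ℝ) {a b : α}
    (ha : a ∈ P) (hb : b ∈ P) (hab : g a ≠ g b) :
    0 < √((∑ e ∈ P, (g e - c) ^ 2) / #P) := by
  obtain ⟨e, he, hec⟩ : ∃ e ∈ P, g e ≠ c := by
    by_contra! h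
    exact hab ((h a ha).trans (h b hb).symm)
  have hP : (0 : ℝ) < #P := by exact_mod_cast card_pos.2 ⟨a, ha⟩
  have hsum : 0 < ∑ e ∈ P, (g e - c) ^ 2 :=
    sum_pos' (fun e _ => sq_nonneg _) ⟨e, he, sq_pos_of_ne_zero (sub_ne_zero.2 hec)⟩
  exact Real.sqrt_pos.2 (div_pos hsum hP)

lemma mem_pairsP {VR VSU : Finset ℕ} {e : Sym2 ℕ} :
    e ∈ pairsP VR VSU ↔ ∃ a ∈ VR, ∃ b ∈ VSU, a ≠ b ∧ s(a, b) = e := by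
  simp [pairsP, and_assoc]

lemma degE_union_of_disjoint {E F : Edges} (h : Disjoint E F) (k : ℕ) :
    degE (E ∪ F) k = degE E k + degE F k := by
  rw [degE, filter_union, card_union_of_disjoint (disjoint_filter_filter h), degE, degE]

lemma card_filter_comp_of_map_eq {α : Type*} {U : Finset α} {σ : α ↪ α} (hσ : U.map σ = U)
    (p : α → Prop) [DecidablePred p] : #(U.filter (p ∘ σ)) = #(U.filter p) := by
  rw [← card_map σ, ← filter_map, hσ]

lemma map_swap_eq_self {α : Type*} [DecidableEq α] {U : Finset α} {a b : α} (ha : a ∈ U)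
    (hb : b ∈ U) : U.map (Equiv.swap a b).toEmbedding = U :=
  map_perm fun x hx => by rcases (Equiv.swap_apply_ne_self_iff.1 hx).2 with rfl | rfl <;> assumption

section Moments

variable {P E E₁ E₂ : Edges}

lemma sum_aInd_mul (h : E ⊆ P) (f : Sym2 ℕ → ℝ) : ∑ e ∈ P, aInd E e * f e = ∑ e ∈ E, f e := by
  simp only [aInd, ite_mul, one_mul, zero_mul]
  rw [← sum_filter, filter_mem_eq_inter, inter_eq_right.2 h]

lemma sum_aInd_sub_mul (h : E ⊆ P) (c : ℝ) (f : Sym2 ℕ → ℝ) :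
    ∑ e ∈ P, (aInd E e - c) * f e = ∑ e ∈ E, f e - c * ∑ e ∈ P, f e := by
  simp only [sub_mul, sum_sub_distrib, sum_aInd_mul h, mul_sum]

lemma sum_aInd_sub_sq (h : E ⊆ P) (c : ℝ) :
    ∑ e ∈ P, (aInd E e - c) ^ 2 = #E - 2 * c * #E + #P * c ^ 2 := by
  have hsq : ∀ e, (aInd E e - c) ^ 2 = aInd E e * (1 - 2 * c) + c ^ 2 := by
    intro e
    unfold aInd
    split <;> ring
  simp only [hsq, sum_add_distrib, sum_aInd_mul h, sum_const, nsmul_eq_mul]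
  ring

variable {VR VSU : Finset ℕ}

lemma sigmaAC_eq_of_card_eq (h₁ : E₁ ⊆ pairsP VR VSU) (h₂ : E₂ ⊆ pairsP VR VSU)
    (hc : #E₁ = #E₂) : sigmaAC VR VSU E₁ = sigmaAC VR VSU E₂ := by
  simp only [sigmaAC, AbarC, sum_aInd_sub_sq h₁, sum_aInd_sub_sq h₂, hc]

/-- `Ā` and `σ(A)` see `E` only through `#E`, and `Z̄`, `σ(Z)` not at all, so only the
covariance term `∑ e ∈ E, 1{Z_i = Z_j}` can tell `E₁` from `E₂`. -/
lemma homophilyC_lt_of_card_eq {Z : ℕ → Bool} (h₁ : E₁ ⊆ pairsP VR VSU)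
    (h₂ : E₂ ⊆ pairsP VR VSU) (hc : #E₁ = #E₂) (hA : 0 < sigmaAC VR VSU E₁)
    (hZ : 0 < sigmaZC VR VSU Z) (hlt : ∑ e ∈ E₂, zInd Z e < ∑ e ∈ E₁, zInd Z e) :
    homophilyC VR VSU E₂ Z < homophilyC VR VSU E₁ Z := by
  have hP : (0 : ℝ) < #(pairsP VR VSU) := by
    refine Nat.cast_pos.2 (Nat.pos_of_ne_zero fun h0 => ?_)
    simp [sigmaAC, h0] at hA
  have hAbar : AbarC VR VSU E₂ = AbarC VR VSU E₁ := by rw [AbarC, AbarC, hc]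
  rw [homophilyC, homophilyC, sigmaAC_eq_of_card_eq h₂ h₁ hc.symm, hAbar]
  refine div_lt_div_of_pos_right ?_ (by positivity)
  simp only [sum_aInd_sub_mul h₁, sum_aInd_sub_mul h₂, sum_sub_distrib, sum_const, hc]
  linarith

end Moments

section Completion

variable {VR U : Finset ℕ} {ER : Finset (ℕ × ℕ)} {anch : ℕ → ℕ}

def pendantEdges (U : Finset ℕ) (anch : ℕ → ℕ) : Edges := U.image fun u => s(u, anch u)

lemma uRec_subset_pairsP (hER : ∀ p ∈ ER, p.1 ∈ VR ∧ p.2 ∈ VR ∧ p.1 ≠ p.2) (VSU : Finset ℕ)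
    (hVSU : VR ⊆ VSU) : uRec ER ⊆ pairsP VR VSU := by
  intro e he
  obtain ⟨p, hp, rfl⟩ := mem_image.1 he
  obtain ⟨h₁, h₂, hne⟩ := hER p hp
  exact mem_pairsP.2 ⟨p.1, h₁, p.2, hVSU h₂, hne, rfl⟩

lemma pendant_mem_pairsP (hU : Disjoint U VR) {u x : ℕ} (hu : u ∈ U) (hx : x ∈ VR) :
    s(u, x) ∈ pairsP VR (VR ∪ U) :=
  mem_pairsP.2 ⟨x, hx, u, mem_union_right _ hu,
    fun h => disjoint_left.1 hU hu (h ▸ hx), Sym2.eq_swap⟩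

lemma mem_of_mem_uRec (hER : ∀ p ∈ ER, p.1 ∈ VR ∧ p.2 ∈ VR ∧ p.1 ≠ p.2) {e : Sym2 ℕ} {v : ℕ}
    (he : e ∈ uRec ER) (hv : v ∈ e) : v ∈ VR := by
  obtain ⟨p, hp, rfl⟩ := mem_image.1 he
  rcases Sym2.mem_iff.1 hv with rfl | rfl
  exacts [(hER p hp).1, (hER p hp).2.1]

variable (hER : ∀ p ∈ ER, p.1 ∈ VR ∧ p.2 ∈ VR ∧ p.1 ≠ p.2) (hU : Disjoint U VR)
  (ha : ∀ u ∈ U, anch u ∈ VR)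
include hER hU ha

lemma completion_subset_pairsP : uRec ER ∪ pendantEdges U anch ⊆ pairsP VR (VR ∪ U) := by
  refine union_subset (uRec_subset_pairsP hER _ subset_union_left) fun e he => ?_
  obtain ⟨u, hu, rfl⟩ := mem_image.1 he
  exact pendant_mem_pairsP hU hu (ha u hu)

omit ha in
lemma disjoint_uRec_pendantEdges : Disjoint (uRec ER) (pendantEdges U anch) := by
  refine disjoint_left.2 fun e he hpe => ?_
  obtain ⟨u, hu, rfl⟩ := mem_image.1 hpe
  exact disjoint_left.1 hU hu (mem_of_mem_uRec hER he (Sym2.mem_mk_left _ _))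

lemma eq_of_mk_mem_completion {u x : ℕ} (hu : u ∈ U)
    (h : s(u, x) ∈ uRec ER ∪ pendantEdges U anch) : x = anch u := by
  have hu' : u ∉ VR := disjoint_left.1 hU hu
  rcases mem_union.1 h with h | h
  · exact absurd (mem_of_mem_uRec hER h (Sym2.mem_mk_left _ _)) hu'
  obtain ⟨v, hv, hvu⟩ := mem_image.1 h
  rcases Sym2.eq_iff.1 hvu with ⟨rfl, rfl⟩ | ⟨-, rfl⟩
  · rfl
  · exact absurd (ha v hv) hu'

omit hER in
lemma pendant_injOn : Set.InjOn (fun u => s(u, anch u)) U := by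
  intro u hu v hv huv
  rcases Sym2.eq_iff.1 huv with ⟨h, -⟩ | ⟨-, h⟩
  · exact h
  · exact absurd (h ▸ ha u hu) (disjoint_left.1 hU hv)

omit hER in
lemma degE_pendantEdges {k : ℕ} (hk : k ∈ VR) :
    degE (pendantEdges U anch) k = #(U.filter (anch · = k)) := by
  rw [degE, pendantEdges, filter_image,
    card_image_of_injOn ((pendant_injOn hU ha).mono (filter_subset _ _))]
  refine congrArg card (filter_congr fun u hu => ?_)
  have hku : k ≠ u := fun h => disjoint_left.1 hU hu (h ▸ hk)
  simp [hku, eq_comm]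

lemma sigmaAC_completion_pos {u x : ℕ} (hu : u ∈ U) (hx : x ∈ VR) (hxu : x ≠ anch u) :
    0 < sigmaAC VR (VR ∪ U) (uRec ER ∪ pendantEdges U anch) := by
  have hmem : s(u, anch u) ∈ uRec ER ∪ pendantEdges U anch :=
    mem_union_right _ (mem_image_of_mem _ hu)
  have hnot : s(u, x) ∉ uRec ER ∪ pendantEdges U anch :=
    fun h => hxu (eq_of_mk_mem_completion hER hU ha hu h)
  exact sqrt_sum_sq_sub_div_card_pos _ (pendant_mem_pairsP hU hu (ha u hu))
    (pendant_mem_pairsP hU hu hx) (by simp [aInd, hmem, hnot])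

lemma card_completion : #(uRec ER ∪ pendantEdges U anch) = #(uRec ER) + #U := by
  rw [card_union_of_disjoint (disjoint_uRec_pendantEdges hER hU), pendantEdges,
    card_image_of_injOn (pendant_injOn hU ha)]

lemma sum_completion (f : Sym2 ℕ → ℝ) :
    ∑ e ∈ uRec ER ∪ pendantEdges U anch, f e = ∑ e ∈ uRec ER, f e + ∑ u ∈ U, f s(u, anch u) := by
  rw [sum_union (disjoint_uRec_pendantEdges hER hU), pendantEdges,
    sum_image (pendant_injOn hU ha)]

lemma compat_completion {d : ℕ → ℕ} {ZR Z : ℕ → Bool} (hd : ∀ k ∈ VR, dRec ER k ≤ d k)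
    (hfib : ∀ k ∈ VR, #(U.filter (anch · = k)) = d k - dRec ER k)
    (hZ : ∀ k ∈ VR, Z k = ZR k) :
    Compat VR ER d ZR (VR ∪ U) (uRec ER ∪ pendantEdges U anch) Z := by
  have hP := completion_subset_pairsP hER hU ha
  refine ⟨fun e he => ?_, subset_union_left, fun e he v hv => ?_,
    fun p hp => mem_union_left _ (mem_image_of_mem _ hp), hZ, fun u hu hu' => ?_,
    fun e he => ?_, fun k hk => ?_⟩
  · obtain ⟨a, -, b, -, hab, rfl⟩ := mem_pairsP.1 (hP he)
    exact Sym2.mk_isDiag_iff.not.2 hab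
  · obtain ⟨a, ha, b, hb, -, rfl⟩ := mem_pairsP.1 (hP he)
    rcases Sym2.mem_iff.1 hv with rfl | rfl
    exacts [mem_union_left _ ha, hb]
  · have hu : u ∈ U := (mem_union.1 hu).resolve_left hu'
    exact ⟨anch u, ha u hu, mem_union_right _ (mem_image_of_mem _ hu)⟩
  · obtain ⟨a, ha, b, -, -, rfl⟩ := mem_pairsP.1 (hP he)
    exact ⟨a, Sym2.mem_mk_left _ _, ha⟩
  · rw [degE_union_of_disjoint (disjoint_uRec_pendantEdges hER hU), degE_pendantEdges hU ha hk, hfib k hk]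
    exact Nat.add_sub_of_le (hd k hk)

end Completion

lemma exists_pendants (VR : Finset ℕ) (m : ℕ → ℕ) :
    ∃ (U : Finset ℕ) (anch : ℕ → ℕ), Disjoint U VR ∧ (∀ u ∈ U, anch u ∈ VR) ∧
      ∀ k ∈ VR, #(U.filter (anch · = k)) = m k := by
  set N := VR.sup id + 1
  set lab : ℕ → ℕ → ℕ := fun k t => N + Nat.pair k t
  have hlab : ∀ k t, (Nat.unpair (lab k t - N)).1 = k := by simp [lab]
  refine ⟨VR.biUnion fun k => (range (m k)).image (lab k), fun u => (Nat.unpair (u - N)).1,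
    disjoint_left.2 fun u hu huVR => ?_, fun u hu => ?_, fun k hk => ?_⟩
  · obtain ⟨k, -, t, -, rfl⟩ : ∃ k ∈ VR, ∃ t < m k, lab k t = u := by simpa using hu
    have := le_sup (f := id) huVR
    simp only [id, lab] at this
    omega
  · obtain ⟨k, hk, t, -, rfl⟩ : ∃ k ∈ VR, ∃ t < m k, lab k t = u := by simpa using hu
    show (Nat.unpair (lab k t - N)).1 ∈ VR
    rwa [hlab]
  · have hfib : (VR.biUnion fun k => (range (m k)).image (lab k)).filter
        (fun u => (Nat.unpair (u - N)).1 = k) = (range (m k)).image (lab k) := by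
      ext u
      simp only [mem_filter, mem_biUnion, mem_image, mem_range]
      constructor
      · rintro ⟨⟨k', -, t, ht, rfl⟩, rfl⟩
        exact ⟨t, by rwa [hlab], by rw [hlab]⟩
      · rintro ⟨t, ht, rfl⟩
        exact ⟨⟨k, hk, t, ht, rfl⟩, hlab k t⟩
    rw [hfib, card_image_of_injective _ fun t t' h => by simpa [lab] using h, card_range]

def pendantTrait (VR : Finset ℕ) (ZR : ℕ → Bool) (anch : ℕ → ℕ) (v : ℕ) : Bool :=
  if v ∈ VR then ZR v else ZR (anch v)

section PendantTrait

variable {VR U : Finset ℕ} {ZR : ℕ → Bool} {anch : ℕ → ℕ}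

lemma pendantTrait_of_mem {v : ℕ} (hv : v ∈ VR) : pendantTrait VR ZR anch v = ZR v := if_pos hv

lemma zInd_pendantTrait (hU : Disjoint U VR) {u x : ℕ} (hu : u ∈ U) (hx : x ∈ VR) :
    zInd (pendantTrait VR ZR anch) s(u, x) = if ZR (anch u) = ZR x then 1 else 0 := by
  simp [zInd, pendantTrait, hx, disjoint_left.1 hU hu]

lemma sigmaZC_pendantTrait_pos (hU : Disjoint U VR) (ha : ∀ u ∈ U, anch u ∈ VR) {u x : ℕ}
    (hu : u ∈ U) (hx : x ∈ VR) (hne : ZR (anch u) ≠ ZR x) :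
    0 < sigmaZC VR (VR ∪ U) (pendantTrait VR ZR anch) := by
  refine sqrt_sum_sq_sub_div_card_pos _ (pendant_mem_pairsP hU hu (ha u hu))
    (pendant_mem_pairsP hU hu hx) ?_
  rw [zInd_pendantTrait hU hu (ha u hu), zInd_pendantTrait hU hu hx, if_pos rfl, if_neg hne]
  norm_num

/-- Every pendant edge of the original anchoring joins equal traits. -/
lemma sum_zInd_completion_lt {ER : Finset (ℕ × ℕ)} {anch' : ℕ → ℕ}
    (hER : ∀ p ∈ ER, p.1 ∈ VR ∧ p.2 ∈ VR ∧ p.1 ≠ p.2) (hU : Disjoint U VR)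
    (ha : ∀ u ∈ U, anch u ∈ VR) (ha' : ∀ u ∈ U, anch' u ∈ VR) {u₀ : ℕ} (hu₀ : u₀ ∈ U)
    (hne : ZR (anch u₀) ≠ ZR (anch' u₀)) :
    ∑ e ∈ uRec ER ∪ pendantEdges U anch', zInd (pendantTrait VR ZR anch) e
      < ∑ e ∈ uRec ER ∪ pendantEdges U anch, zInd (pendantTrait VR ZR anch) e := by
  rw [sum_completion hER hU ha', sum_completion hER hU ha]
  refine (add_lt_add_iff_left _).2 (sum_lt_sum (fun u hu => ?_) ⟨u₀, hu₀, ?_⟩)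
  · rw [zInd_pendantTrait hU hu (ha' u hu), zInd_pendantTrait hU hu (ha u hu), if_pos rfl]
    split_ifs <;> norm_num
  · rw [zInd_pendantTrait hU hu₀ (ha' u₀ hu₀), zInd_pendantTrait hU hu₀ (ha u₀ hu₀), if_neg hne]
    norm_num

end PendantTrait

/-- If distinct `i, j ∈ V_R` have unused degree and different traits, then
the subgraph homophily is not point identified: there are two compatible pairs, each with
`σ(A) > 0` and `σ(Z) > 0`, whose homophily values differ. -/
theorem homophily_not_point_identified
    (VR : Finset ℕ) (ER : Finset (ℕ × ℕ)) (d : ℕ → ℕ) (ZR : ℕ → Bool)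
    (hER : ∀ p ∈ ER, p.1 ∈ VR ∧ p.2 ∈ VR ∧ p.1 ≠ p.2)
    (hd : ∀ k ∈ VR, dRec ER k ≤ d k)
    (i j : ℕ) (hi : i ∈ VR) (hj : j ∈ VR) (hij : i ≠ j)
    (hdi : dRec ER i < d i) (hdj : dRec ER j < d j)
    (hZ : ZR i ≠ ZR j) :
    ∃ (VSU₁ : Finset ℕ) (ESU₁ : Edges) (Z₁ : ℕ → Bool)
      (VSU₂ : Finset ℕ) (ESU₂ : Edges) (Z₂ : ℕ → Bool),
      Compat VR ER d ZR VSU₁ ESU₁ Z₁ ∧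
      Compat VR ER d ZR VSU₂ ESU₂ Z₂ ∧
      0 < sigmaAC VR VSU₁ ESU₁ ∧ 0 < sigmaZC VR VSU₁ Z₁ ∧
      0 < sigmaAC VR VSU₂ ESU₂ ∧ 0 < sigmaZC VR VSU₂ Z₂ ∧
      homophilyC VR VSU₁ ESU₁ Z₁ ≠ homophilyC VR VSU₂ ESU₂ Z₂ := by
  obtain ⟨U, anch, hU, ha, hfib⟩ := exists_pendants VR fun k => d k - dRec ER k
  obtain ⟨ui, hui, rfl⟩ : ∃ u ∈ U, anch u = i := by
    simpa [filter_nonempty_iff] using card_pos.1 ((hfib i hi).trans_gt (Nat.sub_pos_of_lt hdi))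
  obtain ⟨uj, huj, rfl⟩ : ∃ u ∈ U, anch u = j := by
    simpa [filter_nonempty_iff] using card_pos.1 ((hfib j hj).trans_gt (Nat.sub_pos_of_lt hdj))
  set σ := (Equiv.swap ui uj).toEmbedding
  have hσ : U.map σ = U := map_swap_eq_self hui huj
  set anch' : ℕ → ℕ := fun u => anch (σ u)
  have ha' : ∀ u ∈ U, anch' u ∈ VR := fun u hu => ha _ (hσ ▸ mem_map_of_mem σ hu)
  have hfib' : ∀ k ∈ VR, #(U.filter (anch' · = k)) = d k - dRec ER k :=
    fun k hk => (card_filter_comp_of_map_eq hσ (anch · = k)).trans (hfib k hk)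
  set Z := pendantTrait VR ZR anch
  have hZ₀ : ∀ k ∈ VR, Z k = ZR k := fun k hk => pendantTrait_of_mem hk
  have hsub := completion_subset_pairsP hER hU ha
  have hsub' := completion_subset_pairsP hER hU ha'
  have hcard : #(uRec ER ∪ pendantEdges U anch) = #(uRec ER ∪ pendantEdges U anch') := by
    rw [card_completion hER hU ha, card_completion hER hU ha']
  have hσA := sigmaAC_completion_pos hER hU ha hui hj hij.symm
  have hσZ : 0 < sigmaZC VR (VR ∪ U) Z := sigmaZC_pendantTrait_pos hU ha hui hj hZ
  have hlt := sum_zInd_completion_lt hER hU ha ha' hui (ZR := ZR) (by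
    rwa [show anch' ui = anch uj from congrArg anch (Equiv.swap_apply_left ui uj)])
  exact ⟨_, _, Z, _, _, Z, compat_completion hER hU ha hd hfib hZ₀,
    compat_completion hER hU ha' hd hfib' hZ₀, hσA, hσZ,
    sigmaAC_eq_of_card_eq hsub hsub' hcard ▸ hσA, hσZ,
    (homophilyC_lt_of_card_eq hsub hsub' hcard hσA hσZ hlt).ne'⟩

end RDS
end

section
/- Let (G_SU, Z_SU) be a pair compatible with the observed data, let i, j ∈ V_R be vertices that are not adjacent in G_SU, and let u₁ ≠ u₂ be unsampled vertices (elements of U = V_SU \ V_R) with {i,u₁} ∈ E_SU and {j,u₂} ∈ E_SU. Construct G* by deleting the edges {i,u₁} and {j,u₂}, adding the edge {i,j}, and deleting each of u₁, u₂ that is left with no neighbor in V_R. Then (G*, Z*), where Z* is the restriction of Z_SU to the remaining vertices, is compatible with the observed data (G_R, d_R, Z_R). -/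
/-!
Among sampled vertices only `i` and `j` are touched: each loses one pendant edge and gains the
new edge `{i,j}` (new because `i` and `j` were not adjacent), so every reported degree is kept.
Every remaining edge still meets `V_R`. An unsampled vertex is kept only if it retains an edge to
`V_R`; for `u₁` that edge is not `{i,u₁}` by the deletion rule, and not `{j,u₂}` because
`u₁ ≠ u₂`, so it survives the swap.
-/

open Finset

namespace RDS

lemma _root_.Sym2.mk_ne_of_notMem {α : Type*} {x y : α} {z : Sym2 α} (h : x ∉ z) : s(x, y) ≠ z :=
  fun h' => h (h' ▸ Sym2.mem_mk_left x y)

lemma _root_.Finset.mem_ite_erase {α : Type*} [DecidableEq α] {p : Prop} [Decidable p]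
    {s : Finset α} {a b : α} : b ∈ (if p then s else s.erase a) ↔ b ∈ s ∧ (b = a → p) := by
  split_ifs with hp <;> simp [hp, and_comm]

section Degree

variable {E : Edges} {e : Sym2 ℕ} {v : ℕ}

lemma degE_erase_of_notMem (hv : v ∉ e) : degE (E.erase e) v = degE E v := by
  rw [degE, degE, filter_erase, erase_eq_of_notMem]
  exact fun h => hv (mem_filter.1 h).2

lemma degE_erase_add_one (he : e ∈ E) (hv : v ∈ e) : degE (E.erase e) v + 1 = degE E v := by
  rw [degE, filter_erase, card_erase_add_one (mem_filter.2 ⟨he, hv⟩), degE]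

lemma degE_insert_of_notMem (hv : v ∉ e) : degE (insert e E) v = degE E v := by
  rw [degE, filter_insert, if_neg hv, degE]

lemma degE_insert (he : e ∉ E) (hv : v ∈ e) : degE (insert e E) v = degE E v + 1 := by
  rw [degE, filter_insert, if_pos hv,
    card_insert_of_notMem (fun h => he (mem_filter.1 h).1), degE]

end Degree

def swapEdges (E : Edges) (i j u₁ u₂ : ℕ) : Edges :=
  insert s(i, j) ((E.erase s(i, u₁)).erase s(j, u₂))

abbrev HasNbrInExcept (VR : Finset ℕ) (E : Edges) (u i : ℕ) : Prop :=
  ((VR.erase i).filter (fun w => s(w, u) ∈ E)).Nonempty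

def swapVertices (VR VSU : Finset ℕ) (E : Edges) (i j u₁ u₂ : ℕ) : Finset ℕ :=
  let V₁ := if HasNbrInExcept VR E u₁ i then VSU else VSU.erase u₁
  if HasNbrInExcept VR E u₂ j then V₁ else V₁.erase u₂

section Swap

variable {VR VSU : Finset ℕ} {E : Edges} {e : Sym2 ℕ} {i j u u₁ u₂ v : ℕ}

lemma hasNbrInExcept_iff : HasNbrInExcept VR E u i ↔ ∃ w ∈ VR, w ≠ i ∧ s(w, u) ∈ E := by
  simp [HasNbrInExcept, Finset.Nonempty, and_left_comm, and_assoc]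

lemma mem_swapEdges :
    e ∈ swapEdges E i j u₁ u₂ ↔ e = s(i, j) ∨ e ∈ E ∧ e ≠ s(i, u₁) ∧ e ≠ s(j, u₂) := by
  simp only [swapEdges, mem_insert, mem_erase]
  tauto

lemma mem_swapVertices : v ∈ swapVertices VR VSU E i j u₁ u₂ ↔
    v ∈ VSU ∧ (v = u₁ → HasNbrInExcept VR E u₁ i) ∧ (v = u₂ → HasNbrInExcept VR E u₂ j) := by
  simp only [swapVertices, mem_ite_erase, and_assoc]

lemma hasNbrInExcept_of_mem (hE : ∀ e ∈ E, ∃ v ∈ e, v ∈ VR) (hu : u ∉ VR) (he : e ∈ E)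
    (hue : u ∈ e) (hei : e ≠ s(i, u)) : HasNbrInExcept VR E u i := by
  obtain ⟨w, hwe, hw⟩ := hE e he
  obtain rfl : e = s(w, u) := (Sym2.mem_and_mem_iff (ne_of_mem_of_not_mem hw hu)).1 ⟨hwe, hue⟩
  exact hasNbrInExcept_iff.2 ⟨w, hw, fun h => hei (h ▸ rfl), he⟩

lemma subset_swapVertices (hvr : VR ⊆ VSU) (hu₁ : u₁ ∉ VR) (hu₂ : u₂ ∉ VR) :
    VR ⊆ swapVertices VR VSU E i j u₁ u₂ := fun _ hv =>
  mem_swapVertices.2 ⟨hvr hv, fun h => absurd (h ▸ hv) hu₁, fun h => absurd (h ▸ hv) hu₂⟩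

lemma not_isDiag_of_mem_swapEdges (hij : i ≠ j) (hl : ∀ e ∈ E, ¬ e.IsDiag)
    (he : e ∈ swapEdges E i j u₁ u₂) : ¬ e.IsDiag := by
  rcases mem_swapEdges.1 he with rfl | ⟨heE, -, -⟩
  exacts [Sym2.mk_isDiag_iff.not.2 hij, hl e heE]

lemma exists_mem_of_mem_swapEdges (hi : i ∈ VR) (hE : ∀ e ∈ E, ∃ v ∈ e, v ∈ VR)
    (he : e ∈ swapEdges E i j u₁ u₂) : ∃ v ∈ e, v ∈ VR := by
  rcases mem_swapEdges.1 he with rfl | ⟨heE, -, -⟩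
  exacts [⟨i, Sym2.mem_mk_left i j, hi⟩, hE e heE]

lemma mem_swapEdges_of_forall_mem (hu₁ : u₁ ∉ VR) (hu₂ : u₂ ∉ VR) (he : e ∈ E)
    (heVR : ∀ v ∈ e, v ∈ VR) : e ∈ swapEdges E i j u₁ u₂ :=
  mem_swapEdges.2 <| Or.inr ⟨he, fun h => hu₁ (heVR _ (h ▸ Sym2.mem_mk_right i u₁)),
    fun h => hu₂ (heVR _ (h ▸ Sym2.mem_mk_right j u₂))⟩

lemma mem_swapVertices_of_mem_swapEdges (hvr : VR ⊆ VSU) (hes : ∀ e ∈ E, ∀ v ∈ e, v ∈ VSU)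
    (hE : ∀ e ∈ E, ∃ v ∈ e, v ∈ VR) (hi : i ∈ VR) (hj : j ∈ VR) (hu₁ : u₁ ∉ VR)
    (hu₂ : u₂ ∉ VR) (he : e ∈ swapEdges E i j u₁ u₂) (hv : v ∈ e) :
    v ∈ swapVertices VR VSU E i j u₁ u₂ := by
  rcases mem_swapEdges.1 he with rfl | ⟨heE, he₁, he₂⟩
  · rcases Sym2.mem_iff.1 hv with rfl | rfl
    exacts [subset_swapVertices hvr hu₁ hu₂ hi, subset_swapVertices hvr hu₁ hu₂ hj]
  · refine mem_swapVertices.2 ⟨hes e heE v hv, ?_, ?_⟩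
    · rintro rfl
      exact hasNbrInExcept_of_mem hE hu₁ heE hv he₁
    · rintro rfl
      exact hasNbrInExcept_of_mem hE hu₂ heE hv he₂

lemma exists_mem_swapEdges (hcov : ∀ u ∈ VSU, u ∉ VR → ∃ v ∈ VR, s(u, v) ∈ E)
    (hi : i ∈ VR) (hj : j ∈ VR) (huu : u₁ ≠ u₂)
    (hu : u ∈ swapVertices VR VSU E i j u₁ u₂) (huVR : u ∉ VR) :
    ∃ v ∈ VR, s(u, v) ∈ swapEdges E i j u₁ u₂ := by
  obtain ⟨huV, hk₁, hk₂⟩ := mem_swapVertices.1 hu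
  have hui : u ≠ i := ne_of_mem_of_not_mem hi huVR |>.symm
  have huj : u ≠ j := ne_of_mem_of_not_mem hj huVR |>.symm
  suffices ∃ v ∈ VR, s(u, v) ∈ E ∧ s(u, v) ≠ s(i, u₁) ∧ s(u, v) ≠ s(j, u₂) by
    obtain ⟨v, hv, h⟩ := this
    exact ⟨v, hv, mem_swapEdges.2 (Or.inr h)⟩
  by_cases h₁ : u = u₁
  · subst h₁
    obtain ⟨w, hw, hwi, hwE⟩ := hasNbrInExcept_iff.1 (hk₁ rfl)
    refine ⟨w, hw, Sym2.eq_swap ▸ hwE, ?_, Sym2.mk_ne_of_notMem (by simp [huj, huu])⟩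
    rwa [Sym2.eq_swap, Ne, Sym2.congr_left]
  by_cases h₂ : u = u₂
  · subst h₂
    obtain ⟨w, hw, hwj, hwE⟩ := hasNbrInExcept_iff.1 (hk₂ rfl)
    refine ⟨w, hw, Sym2.eq_swap ▸ hwE, Sym2.mk_ne_of_notMem (by simp [hui, Ne.symm huu]), ?_⟩
    rwa [Sym2.eq_swap, Ne, Sym2.congr_left]
  obtain ⟨w, hw, hwE⟩ := hcov u huV huVR
  exact ⟨w, hw, hwE, Sym2.mk_ne_of_notMem (by simp [hui, h₁]),
    Sym2.mk_ne_of_notMem (by simp [huj, h₂])⟩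

lemma degE_swapEdges (hij : i ≠ j) (hiu₂ : i ≠ u₂) (hju₁ : j ≠ u₁) (hv₁ : v ≠ u₁)
    (hv₂ : v ≠ u₂) (hiu : s(i, u₁) ∈ E) (hju : s(j, u₂) ∈ E) (hnadj : s(i, j) ∉ E) :
    degE (swapEdges E i j u₁ u₂) v = degE E v := by
  have hnew : s(i, j) ∉ (E.erase s(i, u₁)).erase s(j, u₂) :=
    fun h => hnadj (mem_of_mem_erase (mem_of_mem_erase h))
  unfold swapEdges
  by_cases hvi : v = i
  · subst hvi
    rw [degE_insert hnew (Sym2.mem_mk_left _ _), degE_erase_of_notMem (by simp [hij, hiu₂]),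
      degE_erase_add_one hiu (Sym2.mem_mk_left _ _)]
  by_cases hvj : v = j
  · subst hvj
    rw [degE_insert hnew (Sym2.mem_mk_right _ _), erase_right_comm,
      degE_erase_of_notMem (by simp [Ne.symm hij, hju₁]),
      degE_erase_add_one hju (Sym2.mem_mk_left _ _)]
  rw [degE_insert_of_notMem (by simp [hvi, hvj]), degE_erase_of_notMem (by simp [hvj, hv₂]),
    degE_erase_of_notMem (by simp [hvi, hv₁])]

end Swap

theorem Compat.swapPendantEdges {VR : Finset ℕ} {ER : Finset (ℕ × ℕ)} {d : ℕ → ℕ}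
    {ZR : ℕ → Bool} {VSU : Finset ℕ} {E : Edges} {Z : ℕ → Bool}
    (hER : ∀ p ∈ ER, p.1 ∈ VR ∧ p.2 ∈ VR) (hc : Compat VR ER d ZR VSU E Z) {i j u₁ u₂ : ℕ}
    (hi : i ∈ VR) (hj : j ∈ VR) (hij : i ≠ j) (hnadj : s(i, j) ∉ E) (hu₁ : u₁ ∉ VR)
    (hu₂ : u₂ ∉ VR) (huu : u₁ ≠ u₂) (hiu : s(i, u₁) ∈ E) (hju : s(j, u₂) ∈ E) :
    Compat VR ER d ZR (swapVertices VR VSU E i j u₁ u₂) (swapEdges E i j u₁ u₂) Z where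
  loopless _ he := not_isDiag_of_mem_swapEdges hij hc.loopless he
  vr_subset := subset_swapVertices hc.vr_subset hu₁ hu₂
  edges_subset _ he _ hv := mem_swapVertices_of_mem_swapEdges hc.vr_subset hc.edges_subset
    hc.no_unsampled_edge hi hj hu₁ hu₂ he hv
  er_subset p hp := mem_swapEdges_of_forall_mem hu₁ hu₂ (hc.er_subset p hp)
    (Sym2.ball.2 (hER p hp))
  trait_agree := hc.trait_agree
  covered _ hu huVR := exists_mem_swapEdges hc.covered hi hj huu hu huVR
  no_unsampled_edge _ he := exists_mem_of_mem_swapEdges hi hc.no_unsampled_edge he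
  degree_eq v hv := (degE_swapEdges hij (ne_of_mem_of_not_mem hi hu₂)
    (ne_of_mem_of_not_mem hj hu₁) (ne_of_mem_of_not_mem hv hu₁) (ne_of_mem_of_not_mem hv hu₂)
    hiu hju hnadj).trans (hc.degree_eq v hv)

theorem swap_pendant_edges_for_internal_edge_compatible_general
    (VR : Finset ℕ) (ER : Finset (ℕ × ℕ)) (d : ℕ → ℕ) (ZR : ℕ → Bool)
    (VSU : Finset ℕ) (ESU : Edges) (Z : ℕ → Bool)
    (hER : ∀ p ∈ ER, p.1 ∈ VR ∧ p.2 ∈ VR)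
    (hc : Compat VR ER d ZR VSU ESU Z)
    (i j u₁ u₂ : ℕ)
    (hi : i ∈ VR) (hj : j ∈ VR) (hij : i ≠ j)
    (hnadj : s(i, j) ∉ ESU)
    (hu₁' : u₁ ∉ VR)
    (hu₂' : u₂ ∉ VR)
    (huu : u₁ ≠ u₂)
    (hiu₁ : s(i, u₁) ∈ ESU) (hju₂ : s(j, u₂) ∈ ESU)
    -- V_SU*: delete u₁ (resp. u₂) when it retains no neighbor in V_R
    (VSU' : Finset ℕ)
    (hVSU' : VSU' =
      (let V₁ := if ((VR.erase i).filter (fun v => s(v, u₁) ∈ ESU)).Nonempty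
                 then VSU else VSU.erase u₁;
       if ((VR.erase j).filter (fun v => s(v, u₂) ∈ ESU)).Nonempty
       then V₁ else V₁.erase u₂)) :
    Compat VR ER d ZR VSU'
      (insert s(i, j) ((ESU.erase s(i, u₁)).erase s(j, u₂)))
      Z := by
  subst hVSU'
  exact hc.swapPendantEdges hER hi hj hij hnadj hu₁' hu₂' huu hiu₁ hju₂

/-- Given a compatible pair, non-adjacent `i, j ∈ V_R`, and unsampled
vertices `u₁ ≠ u₂` with `{i,u₁}, {j,u₂} ∈ E_SU`: deleting the edges `{i,u₁}` and `{j,u₂}`,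
adding the edge `{i,j}`, and deleting each of `u₁, u₂` that is left with no neighbor in
`V_R`, yields another pair compatible with the observed data (with the traits restricted
to the remaining vertices). -/
theorem swap_pendant_edges_for_internal_edge_compatible
    (VR : Finset ℕ) (ER : Finset (ℕ × ℕ)) (d : ℕ → ℕ) (ZR : ℕ → Bool)
    (VSU : Finset ℕ) (ESU : Edges) (Z : ℕ → Bool)
    (hER : ∀ p ∈ ER, p.1 ∈ VR ∧ p.2 ∈ VR)
    (hc : Compat VR ER d ZR VSU ESU Z)
    (i j u₁ u₂ : ℕ)
    (hi : i ∈ VR) (hj : j ∈ VR) (hij : i ≠ j)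
    (hnadj : s(i, j) ∉ ESU)
    (hu₁ : u₁ ∈ VSU) (hu₁' : u₁ ∉ VR)
    (hu₂ : u₂ ∈ VSU) (hu₂' : u₂ ∉ VR)
    (huu : u₁ ≠ u₂)
    (hiu₁ : s(i, u₁) ∈ ESU) (hju₂ : s(j, u₂) ∈ ESU)
    -- V_SU*: delete u₁ (resp. u₂) when it retains no neighbor in V_R
    (VSU' : Finset ℕ)
    (hVSU' : VSU' =
      (let V₁ := if ((VR.erase i).filter (fun v => s(v, u₁) ∈ ESU)).Nonempty
                 then VSU else VSU.erase u₁;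
       if ((VR.erase j).filter (fun v => s(v, u₂) ∈ ESU)).Nonempty
       then V₁ else V₁.erase u₂)) :
    Compat VR ER d ZR VSU'
      (insert s(i, j) ((ESU.erase s(i, u₁)).erase s(j, u₂)))
      Z :=
  swap_pendant_edges_for_internal_edge_compatible_general VR ER d ZR VSU ESU Z hER hc i j u₁ u₂ hi
    hj hij hnadj hu₁' hu₂' huu hiu₁ hju₂ VSU' hVSU'

end RDS
end
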